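/- Let f be a Fibonacci map, let q be the orientation-reversing fixed point of f, let I^1 = (q̂, q), and let {I^k} be the principal nest of f starting from I^1. Then f^{S_k}(c) ∉ I^k for every k ≥ 1. -/

import Mathlib

noncomputable section

/-- The Fibonacci numbers `S 0 = 1`, `S 1 = 2`, `S (k+2) = S (k+1) + S k`. -/
def fibS : ℕ → ℕ
  | 0 => 1
  | 1 => 2
  | n + 2 => fibS (n + 1) + fibS n

/-- `f : [0,1] → [0,1]` is unimodal with critical point `c`: continuous, maps `[0,1]` into
itself, `f 0 = f 1 = 0`, `c ∈ (0,1)`, strictly increasing on `[0,c]`, strictly decreasing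
on `[c,1]`. -/
def IsUnimodal (f : ℝ → ℝ) (c : ℝ) : Prop :=
  ContinuousOn f (Set.Icc 0 1) ∧ Set.MapsTo f (Set.Icc 0 1) (Set.Icc 0 1) ∧
  f 0 = 0 ∧ f 1 = 0 ∧ c ∈ Set.Ioo (0 : ℝ) 1 ∧
  StrictMonoOn f (Set.Icc 0 c) ∧ StrictAntiOn f (Set.Icc c 1)

/-- `f` is symmetric about `c`: `f (2c - x) = f x` whenever both points lie in `[0,1]`
(the symmetric point of `x` is `x̂ = 2c - x`). -/
def SymmetricAbout (f : ℝ → ℝ) (c : ℝ) : Prop :=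
  ∀ x ∈ Set.Icc (0 : ℝ) 1, 2 * c - x ∈ Set.Icc (0 : ℝ) 1 → f (2 * c - x) = f x

/-- The distance from `c` to a nearest `k`-th preimage `c₋ₖ` of `c` in `[0,1]`,
i.e. `|c₋ₖ - c| = |c₋ₖ|`. -/
def preimDist (f : ℝ → ℝ) (c : ℝ) (k : ℕ) : ℝ :=
  sInf ((fun x => |x - c|) '' {x | x ∈ Set.Icc (0 : ℝ) 1 ∧ f^[k] x = c})

/-- `S` is the sequence of cutting times of `f`: `S 0 = 1`, and `S (i+1)` is the least
`k ≥ S i` for which the nearest `k`-th preimage `c₋ₖ` of `c` lies in the symmetric open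
interval `(c₋ₛᵢ, (c₋ₛᵢ)^)`, i.e. `c₋ₖ` exists and is strictly closer to `c` than `c₋ₛᵢ`. -/
def IsCuttingSeq (f : ℝ → ℝ) (c : ℝ) (S : ℕ → ℕ) : Prop :=
  S 0 = 1 ∧ ∀ i, IsLeast {k | S i ≤ k ∧
    ({x | x ∈ Set.Icc (0 : ℝ) 1 ∧ f^[k] x = c}).Nonempty ∧
    preimDist f c k < preimDist f c (S i)} (S (i + 1))

/-- A Fibonacci map: a symmetric unimodal map whose cutting times are exactly the
Fibonacci numbers `1, 2, 3, 5, 8, …`. -/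
def IsFibonacciMap (f : ℝ → ℝ) (c : ℝ) : Prop :=
  IsUnimodal f c ∧ SymmetricAbout f c ∧ IsCuttingSeq f c fibS

/-- The entry domain `D(J) = {x : f^k x ∈ J for some k ≥ 1}`. -/
def entryDom (f : ℝ → ℝ) (J : Set ℝ) : Set ℝ := {x | ∃ k, 1 ≤ k ∧ f^[k] x ∈ J}

/-- The first return time of `x` to `J` equals `m`: `f^[m] x ∈ J` and no earlier positive
iterate of `x` lies in `J`; thus the first return map satisfies `R_J x = f^[m] x`. -/
def ReturnTimeEq (f : ℝ → ℝ) (J : Set ℝ) (x : ℝ) (m : ℕ) : Prop :=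
  1 ≤ m ∧ f^[m] x ∈ J ∧ ∀ k, 1 ≤ k → k < m → f^[k] x ∉ J

/-- `C` is a return domain of `J`: a connected component of `J ∩ D(J)`. -/
def IsReturnDomain (f : ℝ → ℝ) (J C : Set ℝ) : Prop :=
  ∃ x ∈ J ∩ entryDom f J, C = connectedComponentIn (J ∩ entryDom f J) x

/-- The forward orbit of the critical point, `orb⁺(c) = {f^k c : k ≥ 1}`. -/
def posOrbit (f : ℝ → ℝ) (c : ℝ) : Set ℝ := {y | ∃ k, 1 ≤ k ∧ f^[k] c = y}

/-!
Let `d m` be the distance from `c` to a nearest `S_m`-th preimage of `c`. By minimality of the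
cutting times, every preimage of `c` of order `1 ≤ j < S_{K+1}` lies at distance `≥ d K` from
`c`. Hence the critical orbit up to time `S_{K+1}` stays `d K`-away from `c`; and since
`f^{S_{K+1}}` is monotone on `[c, c + d (K+1)]` and maps `c + d (K+2)` to an `S_K`-th preimage of
`c`, even `|f^{S_{K+1}}(c) - c| > d K`.

By induction on `K`, both `(c, c + d K]` and `[c - d K, c)` contain a point whose forward orbit
never enters `I^{K+1}`, so `I^{K+1} ⊆ (c - d K, c + d K)`, which excludes `f^{S_{K+1}}(c)`. In the
induction step, `f^{S_{K+1}}` maps `(c, c + d (K+1))` onto an interval from `c` to beyond distance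
`d K`, so one of these points has a preimage `ξ` there; the orbit of `ξ` avoids `I^{K+1}` at all
positive times, hence neither `ξ` nor its mirror image `2c - ξ` ever enters the return domain
`I^{K+2}`.
-/

open Set Function

theorem fibS_eq_fib : ∀ n, fibS n = Nat.fib (n + 2)
  | 0 => rfl
  | 1 => rfl
  | n + 2 => by
    rw [fibS, fibS_eq_fib (n + 1), fibS_eq_fib n, Nat.fib_add_two (n := n + 2), add_comm]

theorem fibS_strictMono : StrictMono fibS := by
  simpa only [← funext fibS_eq_fib] using Nat.fib_add_two_strictMono

theorem exists_fibS_window {K j : ℕ} (hj : 1 ≤ j) (hjK : j < fibS (K + 1)) :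
    ∃ m ≤ K, fibS m ≤ j ∧ j < fibS (m + 1) := by
  induction K with
  | zero => exact ⟨0, le_rfl, hj, hjK⟩
  | succ K ih =>
    by_cases h : j < fibS (K + 1)
    · obtain ⟨m, hm, hwin⟩ := ih h
      exact ⟨m, hm.trans K.le_succ, hwin⟩
    · exact ⟨K + 1, le_rfl, not_lt.1 h, hjK⟩

theorem ContinuousOn.forall_le_or_forall_ge_of_forall_ne {g : ℝ → ℝ} {u v y : ℝ}
    (hg : ContinuousOn g (Icc u v)) (hne : ∀ x ∈ Ioo u v, g x ≠ y) :
    (∀ x ∈ Icc u v, g x ≤ y) ∨ ∀ x ∈ Icc u v, y ≤ g x := by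
  by_contra! h
  obtain ⟨⟨a, ha, hya⟩, b, hb, hby⟩ := h
  rcases lt_or_gt_of_ne (show a ≠ b by rintro rfl; linarith) with hab | hba
  · obtain ⟨z, hz, hgz⟩ :=
      intermediate_value_Ioo' hab.le (hg.mono (Icc_subset_Icc ha.1 hb.2)) ⟨hby, hya⟩
    exact hne z ⟨ha.1.trans_lt hz.1, hz.2.trans_le hb.2⟩ hgz
  · obtain ⟨z, hz, hgz⟩ :=
      intermediate_value_Ioo hba.le (hg.mono (Icc_subset_Icc hb.1 ha.2)) ⟨hby, hya⟩
    exact hne z ⟨hb.1.trans_lt hz.1, hz.2.trans_le ha.2⟩ hgz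

theorem abs_sub_lt_abs_sub_of_strictMonoOn_or_strictAntiOn {g : ℝ → ℝ} {a b x : ℝ}
    (hg : StrictMonoOn g (Icc a b) ∨ StrictAntiOn g (Icc a b)) (hx : x ∈ Ioo a b) :
    |g x - g b| < |g a - g b| := by
  have ha : a ∈ Icc a b := left_mem_Icc.2 (hx.1.trans hx.2).le
  have hb : b ∈ Icc a b := right_mem_Icc.2 (hx.1.trans hx.2).le
  have hx' := Ioo_subset_Icc_self hx
  rcases hg with h | h
  · have := h ha hx' hx.1
    have := h hx' hb hx.2
    rw [abs_of_neg (by linarith), abs_of_neg (by linarith)]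
    linarith
  · have := h ha hx' hx.1
    have := h hx' hb hx.2
    rw [abs_of_pos (by linarith), abs_of_pos (by linarith)]
    linarith

section Preimages

variable {f : ℝ → ℝ} {c : ℝ}

theorem iterate_reflect (hsym : SymmetricAbout f c) {x : ℝ} (hx : x ∈ Icc (0 : ℝ) 1)
    (hx' : 2 * c - x ∈ Icc (0 : ℝ) 1) {i : ℕ} (hi : 1 ≤ i) : f^[i] (2 * c - x) = f^[i] x := by
  obtain ⟨i, rfl⟩ := Nat.exists_eq_add_of_le' hi
  rw [iterate_succ_apply, iterate_succ_apply, hsym x hx hx']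

theorem preimDist_nonneg (n : ℕ) : 0 ≤ preimDist f c n :=
  Real.sInf_nonneg (by rintro _ ⟨x, -, rfl⟩; exact abs_nonneg _)

theorem preimDist_le_abs_sub {n : ℕ} {x : ℝ} (hx : x ∈ Icc (0 : ℝ) 1) (hfx : f^[n] x = c) :
    preimDist f c n ≤ |x - c| :=
  csInf_le ⟨0, by rintro _ ⟨y, -, rfl⟩; exact abs_nonneg _⟩ ⟨x, ⟨hx, hfx⟩, rfl⟩

theorem IsUnimodal.continuousOn_iterate (hu : IsUnimodal f c) (n : ℕ) :
    ContinuousOn f^[n] (Icc 0 1) :=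
  hu.1.iterate hu.2.1 n

theorem IsUnimodal.exists_preimDist_eq (hu : IsUnimodal f c) {n : ℕ}
    (hpos : 0 < preimDist f c n) :
    ∃ x ∈ Icc (0 : ℝ) 1, f^[n] x = c ∧ |x - c| = preimDist f c n := by
  have hcompact : IsCompact {x | x ∈ Icc (0 : ℝ) 1 ∧ f^[n] x = c} :=
    isCompact_Icc.of_isClosed_subset
      ((hu.continuousOn_iterate n).preimage_isClosed_of_isClosed isClosed_Icc isClosed_singleton)
      fun x hx => hx.1
  have hne : ((fun x => |x - c|) '' {x | x ∈ Icc (0 : ℝ) 1 ∧ f^[n] x = c}).Nonempty := by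
    by_contra hempty
    rw [not_nonempty_iff_eq_empty] at hempty
    rw [preimDist, hempty, Real.sInf_empty] at hpos
    exact lt_irrefl 0 hpos
  obtain ⟨x, ⟨hx, hfx⟩, hdist⟩ := (hcompact.image (by fun_prop)).sInf_mem hne
  exact ⟨x, hx, hfx, hdist⟩

theorem IsUnimodal.injOn_iterate (hu : IsUnimodal f c) {u v : ℝ} (hs : Icc u v ⊆ Icc 0 1) {n : ℕ}
    (hfree : ∀ x ∈ Ioo u v, ∀ i < n, f^[i] x ≠ c) : InjOn f^[n] (Icc u v) := by
  induction n with
  | zero => exact injOn_id _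
  | succ n ih =>
    have hside := ((hu.continuousOn_iterate n).mono hs).forall_le_or_forall_ge_of_forall_ne
      fun x hx => hfree x hx n n.lt_succ_self
    have ⟨_, hmapsTo, _, _, _, hmono, hanti⟩ := hu
    have hmaps : MapsTo f^[n] (Icc u v) (Icc 0 1) := (hmapsTo.iterate n).mono_left hs
    have hinj := ih fun x hx i hi => hfree x hx i (hi.trans n.lt_succ_self)
    rw [iterate_succ']
    rcases hside with h | h
    · exact hmono.injOn.comp hinj fun x hx => ⟨(hmaps hx).1, h x hx⟩
    · exact hanti.injOn.comp hinj fun x hx => ⟨h x hx, (hmaps hx).2⟩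

theorem IsUnimodal.strictMonoOn_or_strictAntiOn_iterate (hu : IsUnimodal f c) {u v : ℝ}
    (huv : u ≤ v) (hs : Icc u v ⊆ Icc 0 1) {n : ℕ} (hfree : ∀ x ∈ Ioo u v, ∀ i < n, f^[i] x ≠ c) :
    StrictMonoOn f^[n] (Icc u v) ∨ StrictAntiOn f^[n] (Icc u v) :=
  ((hu.continuousOn_iterate n).mono hs).strictMonoOn_of_injOn_Icc' huv (hu.injOn_iterate hs hfree)

end Preimages

/-- `cutDist f c m = |c₋ₛₘ - c|` for the cutting times `S = fibS`. -/
def cutDist (f : ℝ → ℝ) (c : ℝ) (m : ℕ) : ℝ := preimDist f c (fibS m)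

section Cutting

variable {f : ℝ → ℝ} {c : ℝ}

theorem IsCuttingSeq.cutDist_succ_lt (hcut : IsCuttingSeq f c fibS) (m : ℕ) :
    cutDist f c (m + 1) < cutDist f c m :=
  (hcut.2 m).1.2.2

theorem IsCuttingSeq.cutDist_pos (hcut : IsCuttingSeq f c fibS) (m : ℕ) : 0 < cutDist f c m :=
  (preimDist_nonneg _).trans_lt (hcut.cutDist_succ_lt m)

theorem IsCuttingSeq.cutDist_strictAnti (hcut : IsCuttingSeq f c fibS) :
    StrictAnti (cutDist f c) :=
  strictAnti_nat_of_succ_lt hcut.cutDist_succ_lt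

theorem IsCuttingSeq.cutDist_le_abs_sub_of_window (hcut : IsCuttingSeq f c fibS) {m j : ℕ}
    (hmj : fibS m ≤ j) (hjm : j < fibS (m + 1)) {x : ℝ} (hx : x ∈ Icc (0 : ℝ) 1)
    (hfx : f^[j] x = c) : cutDist f c m ≤ |x - c| := by
  by_contra! hlt
  have := (hcut.2 m).2 ⟨hmj, ⟨x, hx, hfx⟩, (preimDist_le_abs_sub hx hfx).trans_lt hlt⟩
  omega

theorem IsCuttingSeq.cutDist_le_abs_sub (hcut : IsCuttingSeq f c fibS) {K j : ℕ} (hj : 1 ≤ j)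
    (hjK : j < fibS (K + 1)) {x : ℝ} (hx : x ∈ Icc (0 : ℝ) 1) (hfx : f^[j] x = c) :
    cutDist f c K ≤ |x - c| := by
  obtain ⟨m, hmK, hmj, hjm⟩ := exists_fibS_window hj hjK
  exact (hcut.cutDist_strictAnti.antitone hmK).trans
    (hcut.cutDist_le_abs_sub_of_window hmj hjm hx hfx)

theorem IsUnimodal.Icc_subset_Icc_zero_one (hu : IsUnimodal f c) (hcut : IsCuttingSeq f c fibS)
    (hfc : c < f c) {m : ℕ} {u v : ℝ} (hlo : c - cutDist f c m ≤ u)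
    (hhi : v ≤ c + cutDist f c m) : Icc u v ⊆ Icc 0 1 := by
  obtain ⟨hcont, -, hf0, hf1, hc, -, -⟩ := hu
  obtain ⟨a, ha, hfa⟩ := intermediate_value_Ioo hc.1.le
    (hcont.mono (Icc_subset_Icc le_rfl hc.2.le))
    (show c ∈ Ioo (f 0) (f c) by rw [hf0]; exact ⟨hc.1, hfc⟩)
  obtain ⟨b, hb, hfb⟩ := intermediate_value_Ioo' hc.2.le
    (hcont.mono (Icc_subset_Icc hc.1.le le_rfl))
    (show c ∈ Ioo (f 1) (f c) by rw [hf1]; exact ⟨hc.1, hfc⟩)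
  have hda : cutDist f c 0 ≤ |a - c| :=
    preimDist_le_abs_sub ⟨ha.1.le, ha.2.le.trans hc.2.le⟩ (by simpa [fibS] using hfa)
  have hdb : cutDist f c 0 ≤ |b - c| :=
    preimDist_le_abs_sub ⟨hc.1.le.trans hb.1.le, hb.2.le⟩ (by simpa [fibS] using hfb)
  rw [abs_of_neg (by linarith [ha.2])] at hda
  rw [abs_of_pos (by linarith [hb.1])] at hdb
  have hm := hcut.cutDist_strictAnti.antitone (Nat.zero_le m)
  exact Icc_subset_Icc (by linarith [ha.1]) (by linarith [hb.2])

end Cutting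

namespace IsFibonacciMap

variable {f : ℝ → ℝ} {c : ℝ}

theorem iterate_cutDist_eq (hf : IsFibonacciMap f c) (hfc : c < f c) (m : ℕ) :
    f^[fibS m] (c + cutDist f c m) = c ∧ f^[fibS m] (c - cutDist f c m) = c := by
  obtain ⟨hu, hsym, hcut⟩ := hf
  obtain ⟨x, hx, hfx, hdist⟩ := hu.exists_preimDist_eq (hcut.cutDist_pos m)
  change |x - c| = cutDist f c m at hdist
  have hx' := abs_le.1 hdist.le
  have hreflect : f^[fibS m] (2 * c - x) = c := by
    rw [iterate_reflect hsym hx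
      (hu.Icc_subset_Icc_zero_one hcut hfc (by linarith) (by linarith) ⟨le_rfl, le_rfl⟩)
      (fibS_strictMono.monotone (Nat.zero_le m)), hfx]
  rcases (abs_eq (hcut.cutDist_pos m).le).1 hdist with h | h
  · exact ⟨by rwa [show c + cutDist f c m = x by linarith [h]],
      by rwa [show c - cutDist f c m = 2 * c - x by linarith [h]]⟩
  · exact ⟨by rwa [show c + cutDist f c m = 2 * c - x by linarith [h]],
      by rwa [show c - cutDist f c m = x by linarith [h]]⟩

theorem cutDist_succ_le_abs_sub (hf : IsFibonacciMap f c) (hfc : c < f c) {K i : ℕ}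
    (hi : 1 ≤ i) (hiK : i < fibS (K + 1)) {x : ℝ} (hx : x ∈ Icc (0 : ℝ) 1)
    (hdist : |f^[i] x - c| = cutDist f c K) : cutDist f c (K + 1) ≤ |x - c| := by
  have hS : fibS (K + 1 + 1) = fibS (K + 1) + fibS K := rfl
  refine hf.2.2.cutDist_le_abs_sub (j := fibS K + i) (by omega) (by omega) hx ?_
  rw [iterate_add_apply]
  rcases (abs_eq (hf.2.2.cutDist_pos K).le).1 hdist with h | h
  · rw [show f^[i] x = c + cutDist f c K by linarith]
    exact (hf.iterate_cutDist_eq hfc K).1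
  · rw [show f^[i] x = c - cutDist f c K by linarith]
    exact (hf.iterate_cutDist_eq hfc K).2

theorem cutDist_lt_abs_iterate_fibS_succ (hf : IsFibonacciMap f c) (hfc : c < f c) (k : ℕ) :
    cutDist f c k < |f^[fibS (k + 1)] c - c| := by
  have hu := hf.1
  have hcut := hf.2.2
  have hd₁ := hcut.cutDist_succ_lt k
  have hd₂ := hcut.cutDist_succ_lt (k + 1)
  have hpos := hcut.cutDist_pos (k + 2)
  have hsub : Icc c (c + cutDist f c (k + 1)) ⊆ Icc 0 1 :=
    hu.Icc_subset_Icc_zero_one hcut hfc (by linarith) le_rfl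
  have hfree : ∀ x ∈ Ioo c (c + cutDist f c (k + 1)), ∀ i < fibS (k + 1), f^[i] x ≠ c := by
    rintro x hx (_ | i) hi hfix
    · exact hx.1.ne' hfix
    · have := hcut.cutDist_le_abs_sub (Nat.le_add_left 1 i) hi (hsub ⟨hx.1.le, hx.2.le⟩) hfix
      rw [abs_of_pos (sub_pos.2 hx.1)] at this
      linarith [hx.2]
  have hx₀ : c + cutDist f c (k + 2) ∈ Ioo c (c + cutDist f c (k + 1)) :=
    ⟨by linarith, by linarith⟩
  have hw : cutDist f c k ≤ |f^[fibS (k + 1)] (c + cutDist f c (k + 2)) - c| := by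
    refine preimDist_le_abs_sub (hu.2.1.iterate _ (hsub (Ioo_subset_Icc_self hx₀))) ?_
    rw [← iterate_add_apply, add_comm]
    exact (hf.iterate_cutDist_eq hfc (k + 2)).1
  have hbetween := abs_sub_lt_abs_sub_of_strictMonoOn_or_strictAntiOn
    (hu.strictMonoOn_or_strictAntiOn_iterate (by linarith) hsub hfree) hx₀
  rw [(hf.iterate_cutDist_eq hfc (k + 1)).1] at hbetween
  exact hw.trans_lt hbetween

theorem cutDist_zero_le_abs_apply_sub (hf : IsFibonacciMap f c) (hfc : c < f c) :
    cutDist f c 0 ≤ |f c - c| := by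
  have hu := hf.1
  have hcut := hf.2.2
  have hd := hcut.cutDist_succ_lt 0
  have hpos := hcut.cutDist_pos 1
  set y := c + cutDist f c 1
  have hsub : Icc c (c + cutDist f c 0) ⊆ Icc 0 1 :=
    hu.Icc_subset_Icc_zero_one hcut hfc (by linarith) le_rfl
  have hy : y ∈ Icc c 1 := ⟨by linarith, (hsub ⟨by linarith, by linarith⟩).2⟩
  have hy₀ : c + cutDist f c 0 ∈ Icc c 1 := ⟨by linarith, (hsub ⟨by linarith, le_rfl⟩).2⟩
  have ⟨_, hmapsTo, _, _, hc, _, hanti⟩ := hu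
  have hfy : cutDist f c 0 ≤ |f y - c| :=
    preimDist_le_abs_sub (hmapsTo (hsub ⟨hy.1, by linarith⟩)) (hf.iterate_cutDist_eq hfc 1).1
  have h₁ : c < f y := by
    have := hanti hy hy₀ (by linarith)
    rwa [show f (c + cutDist f c 0) = c from (hf.iterate_cutDist_eq hfc 0).1] at this
  have h₂ : f y ≤ f c := hanti.antitoneOn (left_mem_Icc.2 hc.2.le) hy hy.1
  rw [abs_of_pos (by linarith)] at hfy
  rw [abs_of_pos (by linarith)]
  linarith

theorem cutDist_succ_le_abs_iterate_of_lt (hf : IsFibonacciMap f c) (hfc : c < f c) {m j : ℕ}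
    (hmj : fibS (m + 1) < j) (hjm : j < fibS (m + 2)) :
    cutDist f c (m + 1) ≤ |f^[j] c - c| := by
  have hu := hf.1
  have hcut := hf.2.2
  by_contra! hlt
  have hpos := hcut.cutDist_pos (m + 2)
  have hsub : Icc c (c + cutDist f c (m + 2)) ⊆ Icc 0 1 :=
    hu.Icc_subset_Icc_zero_one hcut hfc (by linarith) le_rfl
  have hS : fibS (m + 2) = fibS (m + 1) + fibS m := rfl
  have hSm : fibS m < fibS (m + 1) := fibS_strictMono m.lt_succ_self
  -- the `j`-th image of the right end is a preimage of `c` of order `fibS (m + 2) - j < fibS m`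
  have hW : cutDist f c m ≤ |f^[j] (c + cutDist f c (m + 2)) - c| := by
    refine hcut.cutDist_le_abs_sub (j := fibS (m + 2) - j) (by omega) (by omega)
      (hu.2.1.iterate _ (hsub (right_mem_Icc.2 (by linarith)))) ?_
    rw [← iterate_add_apply, Nat.sub_add_cancel hjm.le]
    exact (hf.iterate_cutDist_eq hfc (m + 2)).1
  obtain ⟨x, hx, hgx⟩ := intermediate_value_Ioo (f := fun x => |f^[j] x - c|) (by linarith)
    (((hu.continuousOn_iterate j).mono hsub).sub continuousOn_const).abs
    ⟨hlt, hW.trans_lt' (hcut.cutDist_succ_lt m)⟩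
  have := hf.cutDist_succ_le_abs_sub hfc (by omega) hjm (hsub ⟨hx.1.le, hx.2.le⟩) hgx
  rw [abs_of_pos (sub_pos.2 hx.1)] at this
  linarith [hx.2]

theorem cutDist_le_abs_iterate_of_window (hf : IsFibonacciMap f c) (hfc : c < f c) {m j : ℕ}
    (hmj : fibS m ≤ j) (hjm : j < fibS (m + 1)) : cutDist f c m ≤ |f^[j] c - c| := by
  rcases m with _ | m
  · obtain rfl : j = 1 := by change 1 ≤ j at hmj; change j < 2 at hjm; omega
    simpa using hf.cutDist_zero_le_abs_apply_sub hfc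
  · rcases hmj.eq_or_lt with rfl | hlt
    · exact ((hf.2.2.cutDist_succ_lt m).trans (hf.cutDist_lt_abs_iterate_fibS_succ hfc m)).le
    · exact hf.cutDist_succ_le_abs_iterate_of_lt hfc hlt hjm

theorem cutDist_le_abs_iterate (hf : IsFibonacciMap f c) (hfc : c < f c) {K j : ℕ} (hj : 1 ≤ j)
    (hjK : j < fibS (K + 1)) : cutDist f c K ≤ |f^[j] c - c| := by
  obtain ⟨m, hmK, hmj, hjm⟩ := exists_fibS_window hj hjK
  exact (hf.2.2.cutDist_strictAnti.antitone hmK).trans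
    (hf.cutDist_le_abs_iterate_of_window hfc hmj hjm)

theorem cutDist_le_abs_iterate_of_mem_Ico (hf : IsFibonacciMap f c) (hfc : c < f c) {K i : ℕ}
    (hi : 1 ≤ i) (hiK : i < fibS (K + 1)) {ξ : ℝ} (hξ : ξ ∈ Ico c (c + cutDist f c (K + 1))) :
    cutDist f c K ≤ |f^[i] ξ - c| := by
  by_contra! hlt
  have hsub : Icc c ξ ⊆ Icc 0 1 :=
    hf.1.Icc_subset_Icc_zero_one hf.2.2 hfc (m := K + 1)
      (by linarith [hf.2.2.cutDist_pos (K + 1)]) hξ.2.le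
  obtain ⟨x, hx, hgx⟩ := intermediate_value_Icc' (f := fun x => |f^[i] x - c|) hξ.1
    (((hf.1.continuousOn_iterate i).mono hsub).sub continuousOn_const).abs
    ⟨hlt.le, hf.cutDist_le_abs_iterate hfc hi hiK⟩
  have := hf.cutDist_succ_le_abs_sub hfc hi hiK (hsub hx) hgx
  rw [abs_of_nonneg (sub_nonneg.2 hx.1)] at this
  linarith [hx.2, hξ.2]

end IsFibonacciMap

theorem IsPreconnected.subset_Ioo_of_notMem {α : Type*} [LinearOrder α] [TopologicalSpace α]
    [OrderClosedTopology α] {J : Set α} (hJ : IsPreconnected J) {a b c : α} (hc : c ∈ J)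
    (ha : a ∉ J) (hb : b ∉ J) (hac : a ≤ c) (hcb : c ≤ b) : J ⊆ Ioo a b := by
  intro y hy
  constructor
  · by_contra! h
    exact ha (hJ.Icc_subset hy hc ⟨h, hac⟩)
  · by_contra! h
    exact hb (hJ.Icc_subset hc hy ⟨hcb, h⟩)

section Nest

variable {f : ℝ → ℝ} {c : ℝ}

def HasAvoidingPoints (f : ℝ → ℝ) (c r : ℝ) (J : Set ℝ) : Prop :=
  (∃ p ∈ Ioc c (c + r), ∀ i, f^[i] p ∉ J) ∧ ∃ m ∈ Ico (c - r) c, ∀ i, f^[i] m ∉ J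

theorem HasAvoidingPoints.subset_Ioo {r : ℝ} {J : Set ℝ} (h : HasAvoidingPoints f c r J)
    (hJ : IsPreconnected J) (hc : c ∈ J) : J ⊆ Ioo (c - r) (c + r) := by
  obtain ⟨⟨p, hp, hpJ⟩, m, hm, hmJ⟩ := h
  exact (hJ.subset_Ioo_of_notMem hc (hmJ 0) (hpJ 0) hm.2.le hp.1.le).trans
    (Ioo_subset_Ioo hm.1 hp.2)

theorem IsReturnDomain.isPreconnected {J C : Set ℝ} (h : IsReturnDomain f J C) :
    IsPreconnected C := by
  obtain ⟨x, -, rfl⟩ := h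
  exact isPreconnected_connectedComponentIn

theorem IsReturnDomain.iterate_notMem {J C : Set ℝ} (h : IsReturnDomain f J C) {x : ℝ}
    (hx : ∀ i, 1 ≤ i → f^[i] x ∉ J) (i : ℕ) : f^[i] x ∉ C := by
  obtain ⟨y, -, rfl⟩ := h
  intro hC
  obtain ⟨hJ, k, hk, hkJ⟩ := connectedComponentIn_subset _ _ hC
  rcases i with _ | i
  · exact hx k hk hkJ
  · exact hx (i + 1) (Nat.le_add_left 1 i) hJ

theorem IsUnimodal.lt_apply_of_isFixedPt (hu : IsUnimodal f c) {q : ℝ} (hq : f q = q)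
    (hqI : q ∈ Ioo c 1) : c < f c := by
  obtain ⟨-, -, -, -, hc, -, hanti⟩ := hu
  have := hanti (left_mem_Icc.2 hc.2.le) ⟨hqI.1.le, hqI.2.le⟩ hqI.1
  rw [hq] at this
  exact hqI.1.trans this

namespace IsFibonacciMap

theorem hasAvoidingPoints_zero (hf : IsFibonacciMap f c) {q : ℝ} (hq : f q = q)
    (hqI : q ∈ Ioo c 1) : HasAvoidingPoints f c (cutDist f c 0) (Ioo (2 * c - q) q) := by
  have hfc := hf.1.lt_apply_of_isFixedPt hq hqI
  have hpos := hf.2.2.cutDist_pos 0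
  have hsub := hf.1.Icc_subset_Icc_zero_one hf.2.2 hfc (m := 0) le_rfl le_rfl
  -- `f (c + d 0) = c < q = f q`, and `f` decreases on `[c, 1]`
  have hqd : q < c + cutDist f c 0 := by
    by_contra! h
    have ⟨_, _, _, _, _, _, hanti⟩ := hf.1
    have := hanti.antitoneOn ⟨by linarith, (hsub ⟨by linarith, le_rfl⟩).2⟩ ⟨hqI.1.le, hqI.2.le⟩ h
    rw [hq, show f (c + cutDist f c 0) = c from (hf.iterate_cutDist_eq hfc 0).1] at this
    linarith [hqI.1]
  have hqmem : q ∈ Icc (0 : ℝ) 1 := hsub ⟨by linarith [hqI.1], hqd.le⟩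
  have hq' : 2 * c - q ∈ Icc (0 : ℝ) 1 := hsub ⟨by linarith, by linarith [hqI.1]⟩
  have hqJ : q ∉ Ioo (2 * c - q) q := fun h => lt_irrefl q h.2
  refine ⟨⟨q, ⟨hqI.1, hqd.le⟩, fun i => by rw [iterate_fixed hq]; exact hqJ⟩,
    2 * c - q, ⟨by linarith, by linarith [hqI.1]⟩, ?_⟩
  rintro (_ | i)
  · exact fun h => lt_irrefl _ h.1
  · rw [iterate_reflect hf.2.1 hqmem hq' (Nat.le_add_left 1 i), iterate_fixed hq]
    exact hqJ

theorem exists_mem_Ioo_forall_iterate_notMem (hf : IsFibonacciMap f c) (hfc : c < f c) {K : ℕ}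
    {J : Set ℝ} (hJ : HasAvoidingPoints f c (cutDist f c K) J)
    (hJsub : J ⊆ Ioo (c - cutDist f c K) (c + cutDist f c K)) :
    ∃ ξ ∈ Ioo c (c + cutDist f c (K + 1)), ∀ i, 1 ≤ i → f^[i] ξ ∉ J := by
  obtain ⟨⟨p, hp, hpJ⟩, m, hm, hmJ⟩ := hJ
  have hce : c ≤ c + cutDist f c (K + 1) := by linarith [hf.2.2.cutDist_pos (K + 1)]
  have hcont : ContinuousOn f^[fibS (K + 1)] (Icc c (c + cutDist f c (K + 1))) :=
    (hf.1.continuousOn_iterate _).mono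
      (hf.1.Icc_subset_Icc_zero_one hf.2.2 hfc (by linarith) le_rfl)
  have he := (hf.iterate_cutDist_eq hfc (K + 1)).1
  obtain ⟨y, hyJ, ξ, hξ, hξy⟩ : ∃ y, (∀ i, f^[i] y ∉ J) ∧
      ∃ ξ ∈ Ioo c (c + cutDist f c (K + 1)), f^[fibS (K + 1)] ξ = y := by
    rcases lt_abs.1 (hf.cutDist_lt_abs_iterate_fibS_succ hfc K) with h | h
    · exact ⟨p, hpJ, intermediate_value_Ioo' hce hcont
        (by rw [he]; exact ⟨hp.1, by linarith [hp.2]⟩)⟩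
    · exact ⟨m, hmJ, intermediate_value_Ioo hce hcont
        (by rw [he]; exact ⟨by linarith [hm.1], hm.2⟩)⟩
  refine ⟨ξ, hξ, fun i hi hiJ => ?_⟩
  rcases lt_or_ge i (fibS (K + 1)) with hiK | hiK
  · exact (hf.cutDist_le_abs_iterate_of_mem_Ico hfc hi hiK (Ioo_subset_Ico_self hξ)).not_gt
      (abs_lt.2 ⟨by linarith [(hJsub hiJ).1], by linarith [(hJsub hiJ).2]⟩)
  · rw [← Nat.sub_add_cancel hiK, iterate_add_apply, hξy] at hiJ
    exact hyJ _ hiJ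

theorem hasAvoidingPoints_of_isReturnDomain (hf : IsFibonacciMap f c) (hfc : c < f c) {K : ℕ}
    {J C : Set ℝ} (hJ : HasAvoidingPoints f c (cutDist f c K) J) (hJpre : IsPreconnected J)
    (hcJ : c ∈ J) (hC : IsReturnDomain f J C) :
    HasAvoidingPoints f c (cutDist f c (K + 1)) C := by
  obtain ⟨ξ, hξ, hξJ⟩ :=
    hf.exists_mem_Ioo_forall_iterate_notMem hfc hJ (hJ.subset_Ioo hJpre hcJ)
  have hpos := hf.2.2.cutDist_pos (K + 1)
  have hsub := hf.1.Icc_subset_Icc_zero_one hf.2.2 hfc (m := K + 1) le_rfl le_rfl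
  have hξmem : ξ ∈ Icc (0 : ℝ) 1 := hsub ⟨by linarith [hξ.1], hξ.2.le⟩
  have hξ' : 2 * c - ξ ∈ Icc (0 : ℝ) 1 := hsub ⟨by linarith [hξ.2], by linarith [hξ.1]⟩
  refine ⟨⟨ξ, Ioo_subset_Ioc_self hξ, hC.iterate_notMem hξJ⟩, 2 * c - ξ,
    ⟨by linarith [hξ.2], by linarith [hξ.1]⟩, hC.iterate_notMem fun i hi => ?_⟩
  rw [iterate_reflect hf.2.1 hξmem hξ' hi]
  exact hξJ i hi

theorem hasAvoidingPoints_principalNest (hf : IsFibonacciMap f c) {q : ℝ} (hq : f q = q)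
    (hqI : q ∈ Ioo c 1) {I : ℕ → Set ℝ} (hI1 : I 1 = Ioo (2 * c - q) q)
    (hI : ∀ k, 1 ≤ k → c ∈ I (k + 1) ∧ IsReturnDomain f (I k) (I (k + 1))) :
    ∀ K, IsPreconnected (I (K + 1)) ∧ c ∈ I (K + 1) ∧
      HasAvoidingPoints f c (cutDist f c K) (I (K + 1))
  | 0 => by
    rw [hI1]
    exact ⟨isPreconnected_Ioo, ⟨by linarith [hqI.1], hqI.1⟩, hf.hasAvoidingPoints_zero hq hqI⟩
  | K + 1 => by
    obtain ⟨hpre, hc, hJ⟩ := hf.hasAvoidingPoints_principalNest hq hqI hI1 hI K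
    obtain ⟨hcI, hret⟩ := hI (K + 1) (Nat.le_add_left 1 K)
    exact ⟨hret.isPreconnected, hcI,
      hf.hasAvoidingPoints_of_isReturnDomain (hf.1.lt_apply_of_isFixedPt hq hqI) hJ hpre hc
        hret⟩

end IsFibonacciMap

end Nest

/-- For a Fibonacci map with principal nest `{Iᵏ}` starting from `I¹ = (q̂, q)`,
one has `f^{S_k}(c) ∉ Iᵏ` for every `k ≥ 1`. -/
theorem fibonacci_iterate_not_in_nest (f : ℝ → ℝ) (c q : ℝ) (I : ℕ → Set ℝ)
    (hf : IsFibonacciMap f c)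
    (hq : f q = q) (hqI : q ∈ Set.Ioo c 1)
    (hI1 : I 1 = Set.Ioo (2 * c - q) q)
    (hI : ∀ k, 1 ≤ k → c ∈ I (k + 1) ∧ IsReturnDomain f (I k) (I (k + 1))) :
    ∀ k, 1 ≤ k → f^[fibS k] c ∉ I k := by
  intro k hk hmem
  obtain ⟨K, rfl⟩ := Nat.exists_eq_add_of_le' hk
  obtain ⟨hpre, hc, hJ⟩ := hf.hasAvoidingPoints_principalNest hq hqI hI1 hI K
  have hnear := hJ.subset_Ioo hpre hc hmem
  exact (hf.cutDist_lt_abs_iterate_fibS_succ (hf.1.lt_apply_of_isFixedPt hq hqI) K).not_ge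
    (abs_lt.2 ⟨by linarith [hnear.1], by linarith [hnear.2]⟩).le
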